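/- Let u(t) = e^{itx}e^{iy} with x, y Hermitian, ‖u(t) − 1‖ < 2, and distinct eigenvalues e^{iθ_k(t)}, θ_1(t) > ... > θ_n(t). Then for each 1 ≤ m ≤ n: ∑_{k=1}^m θ_k''(t) = 2 ∑_{k=1}^m ∑_{j=m+1}^n [sin(θ_k(t) − θ_j(t)) / |e^{iθ_k(t)} − e^{iθ_j(t)}|²] · |⟨x v_k(t), v_j(t)⟩|²; in particular the 'diagonal block' terms cancel by antisymmetry. -/

import Mathlib

open Matrix BigOperators Complex

/-- The standard Hermitian inner product on `ℂⁿ`, conjugate-linear in the second entry. -/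
noncomputable def ip {n : ℕ} (v w : Fin n → ℂ) : ℂ := ∑ i, v i * star (w i)

/-- The operator (spectral) norm of a complex matrix. -/
noncomputable def opN {n : ℕ} (a : Matrix (Fin n) (Fin n) ℂ) : ℝ :=
  ‖Matrix.toEuclideanCLM (𝕜 := ℂ) a‖

/- ### Auxiliary lemmas -/

lemma ip_add_left {n : ℕ} (a b c : Fin n → ℂ) : ip (a + b) c = ip a c + ip b c := by
  simp [ip, add_mul, Finset.sum_add_distrib]

lemma ip_smul_left {n : ℕ} (c : ℂ) (a b : Fin n → ℂ) : ip (c • a) b = c * ip a b := by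
  simp [ip, Finset.mul_sum, mul_assoc]

lemma ip_smul_right {n : ℕ} (c : ℂ) (a b : Fin n → ℂ) : ip a (c • b) = star c * ip a b := by
  simp [ip, Finset.mul_sum]; ring_nf; simp [mul_comm, mul_left_comm]

lemma ip_mulVec {n : ℕ} (M : Matrix (Fin n) (Fin n) ℂ) (a b : Fin n → ℂ) :
    ip (M.mulVec a) b = ip a (Mᴴ.mulVec b) := by
  simp only [ip, mulVec, dotProduct, conjTranspose_apply, Finset.sum_mul, Finset.mul_sum,
    star_sum, star_mul', star_star]
  rw [Finset.sum_comm]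
  apply Finset.sum_congr rfl; intro i _; apply Finset.sum_congr rfl; intro j _; ring

lemma ip_conj {n : ℕ} (a b : Fin n → ℂ) : ip b a = star (ip a b) := by
  simp [ip, star_sum, mul_comm]

lemma complete {n : ℕ} (w : Fin n → Fin n → ℂ)
    (horth : ∀ j k : Fin n, ip (w j) (w k) = if j = k then 1 else 0) :
    ∀ p q : Fin n, (∑ j, (starRingEnd ℂ) (w j p) * w j q) = if p = q then 1 else 0 := by
  intro p q
  set G : Matrix (Fin n) (Fin n) ℂ := Matrix.of (fun j i => w j i) with hG
  have h1 : G * Gᴴ = 1 := by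
    ext j k
    simpa [hG, Matrix.mul_apply, Matrix.one_apply, ip] using horth j k
  have h2 : Gᴴ * G = 1 := mul_eq_one_comm.mp h1
  have := congrFun (congrFun h2 p) q
  simpa [hG, Matrix.mul_apply, Matrix.one_apply] using this

lemma parseval {n : ℕ} (w : Fin n → Fin n → ℂ)
    (horth : ∀ j k : Fin n, ip (w j) (w k) = if j = k then 1 else 0)
    (a b : Fin n → ℂ) : ip a b = ∑ j, ip a (w j) * star (ip b (w j)) := by
  have hc := complete w horth
  have h1 : ∀ j, ip a (w j) * star (ip b (w j))
      = ∑ p, ∑ q, a p * star (b q) * ((starRingEnd ℂ) (w j p) * w j q) := by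
    intro j
    simp only [ip, star_sum, star_mul', star_star, Finset.sum_mul, Finset.mul_sum]
    rw [Finset.sum_comm]
    apply Finset.sum_congr rfl; intro p _; apply Finset.sum_congr rfl; intro q _
    simp only [starRingEnd_apply]; ring
  rw [Finset.sum_congr rfl (fun j _ => h1 j)]
  rw [Finset.sum_comm]
  have h2 : ∀ p, (∑ j, ∑ q, a p * star (b q) * ((starRingEnd ℂ) (w j p) * w j q))
      = ∑ q, a p * star (b q) * (∑ j, (starRingEnd ℂ) (w j p) * w j q) := by
    intro p
    rw [Finset.sum_comm]
    exact Finset.sum_congr rfl fun q _ => by rw [Finset.mul_sum]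
  rw [Finset.sum_congr rfl (fun p _ => h2 p)]
  simp [hc, ip]

lemma expansion {n : ℕ} (w : Fin n → Fin n → ℂ)
    (horth : ∀ j k : Fin n, ip (w j) (w k) = if j = k then 1 else 0)
    (a : Fin n → ℂ) : a = fun i => ∑ j, ip a (w j) * w j i := by
  have hc := complete w horth
  funext i
  have h1 : ∀ j, ip a (w j) * w j i = ∑ q, a q * ((starRingEnd ℂ) (w j q) * w j i) := by
    intro j
    simp only [ip, Finset.sum_mul]
    apply Finset.sum_congr rfl; intro q _; simp only [starRingEnd_apply]; ring
  rw [Finset.sum_congr rfl (fun j _ => h1 j), Finset.sum_comm]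
  have h2 : ∀ q, (∑ j, a q * ((starRingEnd ℂ) (w j q) * w j i))
      = a q * ∑ j, (starRingEnd ℂ) (w j q) * w j i := by
    intro q; rw [Finset.mul_sum]
  rw [Finset.sum_congr rfl (fun q _ => h2 q)]
  simp [hc]

lemma uadj {n : ℕ} (u : Matrix (Fin n) (Fin n) ℂ) (w : Fin n → Fin n → ℂ) (lam : Fin n → ℂ)
    (horth : ∀ j k : Fin n, ip (w j) (w k) = if j = k then 1 else 0)
    (heig : ∀ k, u.mulVec (w k) = lam k • w k) (p : Fin n) :
    uᴴ.mulVec (w p) = star (lam p) • w p := by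
  have hipq : ∀ q, ip (uᴴ.mulVec (w p)) (w q) = star (lam q) * (if p = q then 1 else 0) := by
    intro q
    rw [ip_mulVec, conjTranspose_conjTranspose, heig q, ip_smul_right, horth]
  rw [expansion w horth (uᴴ.mulVec (w p))]
  funext i
  rw [Finset.sum_congr rfl (fun q _ => by rw [hipq q])]
  simp [mul_ite, ite_mul, Finset.sum_ite_eq]

lemma hasDerivAt_ip {n : ℕ} {f g : ℝ → Fin n → ℂ} {f' g' : Fin n → ℂ} {t : ℝ}
    (hf : HasDerivAt f f' t) (hg : HasDerivAt g g' t) :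
    HasDerivAt (fun s => ip (f s) (g s)) (ip f' (g t) + ip (f t) g') t := by
  have : HasDerivAt (fun s => ∑ i, f s i * star (g s i))
      (∑ i, (f' i * star (g t i) + f t i * star (g' i))) t := by
    apply HasDerivAt.fun_sum
    intro i _
    exact ((hasDerivAt_pi.1 hf) i).fun_mul ((hasDerivAt_pi.1 hg) i).star
  simpa [ip, Finset.sum_add_distrib] using this

lemma hasDerivAt_mulVec {n : ℕ} {U : ℝ → Matrix (Fin n) (Fin n) ℂ}
    {U' : Matrix (Fin n) (Fin n) ℂ} {g : ℝ → Fin n → ℂ} {g' : Fin n → ℂ} {t : ℝ}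
    (hU : ∀ i j, HasDerivAt (fun s => U s i j) (U' i j) t) (hg : HasDerivAt g g' t) :
    HasDerivAt (fun s => (U s).mulVec (g s)) (U'.mulVec (g t) + (U t).mulVec g') t := by
  rw [hasDerivAt_pi]
  intro i
  have : HasDerivAt (fun s => ∑ j, U s i j * g s j)
      (∑ j, (U' i j * g t j + U t i j * g' j)) t := by
    apply HasDerivAt.fun_sum
    intro j _
    exact (hU i j).fun_mul ((hasDerivAt_pi.1 hg) j)
  simpa [mulVec, dotProduct, Finset.sum_add_distrib] using this

lemma hasDerivAt_mulVec_const {n : ℕ} (M : Matrix (Fin n) (Fin n) ℂ)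
    {g : ℝ → Fin n → ℂ} {g' : Fin n → ℂ} {t : ℝ} (hg : HasDerivAt g g' t) :
    HasDerivAt (fun s => M.mulVec (g s)) (M.mulVec g') t := by
  have := hasDerivAt_mulVec (U := fun _ => M) (U' := 0)
    (fun i j => hasDerivAt_const t (M i j)) hg
  simpa using this

lemma hasDerivAt_smulVec {n : ℕ} {c : ℝ → ℂ} {c' : ℂ} {g : ℝ → Fin n → ℂ} {g' : Fin n → ℂ} {t : ℝ}
    (hc : HasDerivAt c c' t) (hg : HasDerivAt g g' t) :
    HasDerivAt (fun s => c s • g s) (c' • g t + c t • g') t := by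
  rw [hasDerivAt_pi]
  intro i
  simpa using hc.fun_mul ((hasDerivAt_pi.1 hg) i)

lemma hasDerivAt_cexp_theta {θ : ℝ → ℝ} {θ' t : ℝ} (h : HasDerivAt θ θ' t) :
    HasDerivAt (fun s => Complex.exp (θ s * Complex.I))
      ((θ' * Complex.I) * Complex.exp (θ t * Complex.I)) t := by
  have h1 : HasDerivAt (fun s => ((θ s : ℂ) * Complex.I)) ((θ' : ℂ) * Complex.I) t :=
    (h.ofReal_comp).mul_const Complex.I
  simpa [mul_comm] using h1.cexp

section MatDeriv
attribute [local instance] Matrix.linftyOpNormedAddCommGroup Matrix.linftyOpNormedRing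
  Matrix.linftyOpNormedAlgebra

lemma hasDerivAt_u_entry {n : ℕ} (x y : Matrix (Fin n) (Fin n) ℂ)
    (u : ℝ → Matrix (Fin n) (Fin n) ℂ)
    (hu : ∀ t, u t = NormedSpace.exp ((Complex.I * t) • x) * NormedSpace.exp (Complex.I • y))
    (t : ℝ) (i j : Fin n) :
    HasDerivAt (fun s => u s i j) ((Complex.I • x * u t) i j) t := by
  set A : Matrix (Fin n) (Fin n) ℂ := Complex.I • x with hA
  set C : Matrix (Fin n) (Fin n) ℂ := NormedSpace.exp (Complex.I • y) with hC
  have hufun : u = fun s => NormedSpace.exp (s • A) * C := by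
    funext s
    rw [hu s]
    congr 1
    congr 1
    rw [hA, mul_comm, mul_smul, ← Complex.coe_smul]
  have h1 : HasDerivAt (fun s : ℝ => NormedSpace.exp (s • A)) (A * NormedSpace.exp (t • A)) t :=
    hasDerivAt_exp_smul_const' A t
  have h2 : HasDerivAt (fun s : ℝ => NormedSpace.exp (s • A) * C)
      ((A * NormedSpace.exp (t • A)) * C) t := h1.mul_const C
  have h3 : HasDerivAt u (A * u t) t := by
    rw [hufun]
    convert h2 using 1
    rw [mul_assoc]
  let L : Matrix (Fin n) (Fin n) ℂ →ₗ[ℝ] ℂ :=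
    { toFun := fun M => M i j
      map_add' := fun a b => rfl
      map_smul' := fun c a => rfl }
  exact (L.toContinuousLinearMap.hasFDerivAt (x := u t)).comp_hasDerivAt t h3

end MatDeriv

lemma exp_theta_ne {α β : ℝ} (hα : α ∈ Set.Ioo (-Real.pi) Real.pi)
    (hβ : β ∈ Set.Ioo (-Real.pi) Real.pi) (hne : α ≠ β) :
    Complex.exp (α * Complex.I) ≠ Complex.exp (β * Complex.I) := by
  intro h
  obtain ⟨m, hm⟩ := Complex.exp_eq_exp_iff_exists_int.mp h
  have him : α = β + m * (2 * Real.pi) := by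
    have := congrArg Complex.im hm
    simpa using this
  obtain ⟨hα1, hα2⟩ := hα
  obtain ⟨hβ1, hβ2⟩ := hβ
  have hπ := Real.pi_pos
  have hm0 : m = 0 := by
    rcases lt_trichotomy m 0 with hh|hh|hh
    · exfalso
      have h1 : (m : ℝ) ≤ -1 := by exact_mod_cast Int.le_sub_one_iff.mpr hh
      nlinarith
    · exact hh
    · exfalso
      have h1 : (1 : ℝ) ≤ (m : ℝ) := by exact_mod_cast hh
      nlinarith
  rw [hm0] at him
  simp at him
  exact hne him

lemma re_term (α β : ℝ)
    (hne : Complex.exp (α * Complex.I) ≠ Complex.exp (β * Complex.I)) (a : ℂ) :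
    (a * star (Complex.I * Complex.exp (α * Complex.I) * a
        / (Complex.exp (α * Complex.I) - Complex.exp (β * Complex.I)))).re
      = Real.sin (α - β)
          / ‖Complex.exp (α * Complex.I) - Complex.exp (β * Complex.I)‖ ^ 2
          * ‖a‖ ^ 2 := by
  simp only [Complex.star_def]
  set z := Complex.exp (α * Complex.I) with hz
  set w := Complex.exp (β * Complex.I) with hw
  have hd : z - w ≠ 0 := sub_ne_zero.mpr hne
  have hnsq : Complex.normSq (z - w) ≠ 0 := (Complex.normSq_pos.mpr hd).ne'
  have h1 : a * (starRingEnd ℂ) (Complex.I * z * a / (z - w))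
      = (Complex.normSq a : ℂ) * (starRingEnd ℂ) (Complex.I * z / (z - w)) := by
    rw [show Complex.I * z * a / (z - w) = (Complex.I * z / (z - w)) * a by ring]
    rw [_root_.map_mul]
    rw [show a * ((starRingEnd ℂ) (Complex.I * z / (z - w)) * (starRingEnd ℂ) a)
        = (a * (starRingEnd ℂ) a) * (starRingEnd ℂ) (Complex.I * z / (z - w)) by ring]
    rw [Complex.mul_conj]
  rw [h1, Complex.re_ofReal_mul, Complex.conj_re]
  have h2 : (Complex.I * z / (z - w)).re
      = (Complex.I * z * (starRingEnd ℂ) (z - w)).re / Complex.normSq (z - w) := by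
    simp only [Complex.div_re, Complex.mul_re, Complex.conj_re, Complex.conj_im]
    ring
  have hzz : z * (starRingEnd ℂ) z = 1 := by
    rw [Complex.mul_conj]
    norm_cast
    simp [Complex.normSq_eq_norm_sq, hz, Complex.norm_exp_ofReal_mul_I]
  have h3 : Complex.I * z * (starRingEnd ℂ) (z - w)
      = Complex.I * (1 - z * (starRingEnd ℂ) w) := by
    rw [map_sub]
    rw [show Complex.I * z * ((starRingEnd ℂ) z - (starRingEnd ℂ) w)
        = Complex.I * (z * (starRingEnd ℂ) z) - Complex.I * (z * (starRingEnd ℂ) w) by ring, hzz]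
    ring
  have h4 : z * (starRingEnd ℂ) w = Complex.exp ((α - β : ℝ) * Complex.I) := by
    rw [hz, hw, ← Complex.exp_conj, ← Complex.exp_add]
    congr 1
    rw [_root_.map_mul, Complex.conj_I, Complex.conj_ofReal]
    push_cast
    ring
  have h5 : (Complex.I * (1 - z * (starRingEnd ℂ) w)).re = Real.sin (α - β) := by
    rw [h4]
    simp only [Complex.mul_re, Complex.I_re, Complex.I_im, Complex.sub_re, Complex.sub_im,
      Complex.one_re, Complex.one_im, Complex.mul_im]
    rw [Complex.exp_ofReal_mul_I_im]
    ring
  rw [h2, h3, h5, Complex.sq_norm, Complex.sq_norm]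
  field_simp

/-- Second variation formula for partial sums of the angles of `u(t) = e^{itx}e^{iy}`:
`∑_{k=1}^m θ_k''(t) = 2 ∑_{k≤m} ∑_{j>m} [sin(θ_k−θ_j)/|e^{iθ_k}−e^{iθ_j}|²]·|⟨x v_k, v_j⟩|²`
(the diagonal block terms cancel by antisymmetry). -/
theorem second_variation_partial_sums {n : ℕ} (I : Set ℝ) (hIopen : IsOpen I)
    (x y : Matrix (Fin n) (Fin n) ℂ) (hx : x.IsHermitian) (hy : y.IsHermitian)
    (u : ℝ → Matrix (Fin n) (Fin n) ℂ)
    (hu : ∀ t, u t = NormedSpace.exp ((Complex.I * t) • x) * NormedSpace.exp (Complex.I • y))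
    (hnorm : ∀ t ∈ I, opN (u t - 1) < 2)
    (θ : Fin n → ℝ → ℝ) (v : Fin n → ℝ → (Fin n → ℂ))
    (hrange : ∀ t ∈ I, ∀ k : Fin n, θ k t ∈ Set.Ioo (-Real.pi) Real.pi)
    (hanti : ∀ t ∈ I, StrictAnti fun k : Fin n => θ k t)
    (hθ : ∀ k : Fin n, ∀ t ∈ I, DifferentiableAt ℝ (θ k) t)
    (hθ' : ∀ k : Fin n, ∀ t ∈ I, DifferentiableAt ℝ (deriv (θ k)) t)
    (hv : ∀ k : Fin n, ∀ t ∈ I, DifferentiableAt ℝ (v k) t)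
    (heig : ∀ k : Fin n, ∀ t ∈ I,
      (u t).mulVec (v k t) = Complex.exp (θ k t * Complex.I) • v k t)
    (horth : ∀ t ∈ I, ∀ j k : Fin n, ip (v j t) (v k t) = if j = k then 1 else 0) :
    ∀ m : ℕ, 1 ≤ m → m ≤ n → ∀ t ∈ I,
      ∑ k ∈ Finset.univ.filter (fun k : Fin n => (k : ℕ) < m), deriv (deriv (θ k)) t
        = 2 * ∑ k ∈ Finset.univ.filter (fun k : Fin n => (k : ℕ) < m),
            ∑ j ∈ Finset.univ.filter (fun j : Fin n => m ≤ (j : ℕ)),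
              Real.sin (θ k t - θ j t)
                / ‖(Complex.exp (θ k t * Complex.I)
                    - Complex.exp (θ j t * Complex.I))‖ ^ 2
                * ‖(ip (x.mulVec (v k t)) (v j t))‖ ^ 2 := by
  intro m hm1 hmn t ht
  have hmemI : ∀ τ ∈ I, I ∈ nhds τ := fun τ hτ => hIopen.mem_nhds hτ
  -- first-order identity
  have key1 : ∀ τ ∈ I, ∀ k j : Fin n,
      Complex.I * Complex.exp (θ k τ * Complex.I) * ip (x.mulVec (v k τ)) (v j τ)
        + Complex.exp (θ j τ * Complex.I) * ip (deriv (v k) τ) (v j τ)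
      = (if k = j then ((deriv (θ k) τ : ℝ) : ℂ) * Complex.I * Complex.exp (θ k τ * Complex.I) else 0)
        + Complex.exp (θ k τ * Complex.I) * ip (deriv (v k) τ) (v j τ) := by
    intro τ hτ k j
    have hvD : ∀ p : Fin n, HasDerivAt (v p) (deriv (v p) τ) τ := fun p => (hv p τ hτ).hasDerivAt
    have hθD : HasDerivAt (θ k) (deriv (θ k) τ) τ := (hθ k τ hτ).hasDerivAt
    have hL : HasDerivAt (fun s => (u s).mulVec (v k s))
        ((Complex.I • x * u τ).mulVec (v k τ) + (u τ).mulVec (deriv (v k) τ)) τ :=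
      hasDerivAt_mulVec (fun i j' => hasDerivAt_u_entry x y u hu τ i j') (hvD k)
    have hR : HasDerivAt (fun s => Complex.exp (θ k s * Complex.I) • v k s)
        ((((deriv (θ k) τ : ℝ) : ℂ) * Complex.I * Complex.exp (θ k τ * Complex.I)) • v k τ
          + Complex.exp (θ k τ * Complex.I) • deriv (v k) τ) τ :=
      hasDerivAt_smulVec (hasDerivAt_cexp_theta hθD) (hvD k)
    have hev : (fun s => Complex.exp (θ k s * Complex.I) • v k s)
        =ᶠ[nhds τ] fun s => (u s).mulVec (v k s) :=
      Filter.eventually_of_mem (hmemI τ hτ) (fun s hs => (heig k s hs).symm)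
    have hL' := hL.congr_of_eventuallyEq hev
    have heqd := hL'.unique hR
    have hipeq := congrArg (fun z => ip z (v j τ)) heqd
    rw [ip_add_left, ip_add_left] at hipeq
    have ht1 : ip ((Complex.I • x * u τ).mulVec (v k τ)) (v j τ)
        = Complex.I * Complex.exp (θ k τ * Complex.I) * ip (x.mulVec (v k τ)) (v j τ) := by
      rw [← Matrix.mulVec_mulVec, heig k τ hτ, Matrix.mulVec_smul, Matrix.smul_mulVec,
        ip_smul_left, ip_smul_left]
      ring
    have ht2 : ip ((u τ).mulVec (deriv (v k) τ)) (v j τ)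
        = Complex.exp (θ j τ * Complex.I) * ip (deriv (v k) τ) (v j τ) := by
      rw [ip_mulVec, uadj (u τ) (fun p => v p τ) (fun p => Complex.exp (θ p τ * Complex.I))
        (horth τ hτ) (fun p => heig p τ hτ) j, ip_smul_right, star_star]
    have ht3 : ip (((((deriv (θ k) τ : ℝ) : ℂ) * Complex.I) * Complex.exp (θ k τ * Complex.I)) • v k τ)
        (v j τ)
        = if k = j then ((deriv (θ k) τ : ℝ) : ℂ) * Complex.I * Complex.exp (θ k τ * Complex.I)
          else 0 := by
      rw [ip_smul_left, horth τ hτ k j]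
      simp [mul_ite]
    have ht4 : ip ((Complex.exp (θ k τ * Complex.I)) • deriv (v k) τ) (v j τ)
        = Complex.exp (θ k τ * Complex.I) * ip (deriv (v k) τ) (v j τ) := ip_smul_left _ _ _
    rw [ht1, ht2, ht3, ht4] at hipeq
    exact hipeq
  -- first derivative of θ
  have key2 : ∀ τ ∈ I, ∀ k : Fin n,
      ((deriv (θ k) τ : ℝ) : ℂ) = ip (x.mulVec (v k τ)) (v k τ) := by
    intro τ hτ k
    have h := key1 τ hτ k k
    rw [if_pos rfl] at h
    have h2 := add_right_cancel h
    have hIz : Complex.I * Complex.exp (θ k τ * Complex.I) ≠ 0 :=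
      mul_ne_zero Complex.I_ne_zero (Complex.exp_ne_zero _)
    have h3 : Complex.I * Complex.exp (θ k τ * Complex.I) * ip (x.mulVec (v k τ)) (v k τ)
        = Complex.I * Complex.exp (θ k τ * Complex.I) * ((deriv (θ k) τ : ℝ) : ℂ) := by
      rw [h2]; ring
    exact (mul_left_cancel₀ hIz h3).symm
  -- eigenvalues distinct at t
  have hLne : ∀ k j : Fin n, k ≠ j →
      Complex.exp (θ k t * Complex.I) ≠ Complex.exp (θ j t * Complex.I) := by
    intro k j hkj
    apply exp_theta_ne (hrange t ht k) (hrange t ht j)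
    intro hh
    exact hkj ((hanti t ht).injective hh)
  -- off-diagonal coefficients
  have key3 : ∀ k j : Fin n, k ≠ j →
      ip (deriv (v k) t) (v j t)
        = Complex.I * Complex.exp (θ k t * Complex.I) * ip (x.mulVec (v k t)) (v j t)
          / (Complex.exp (θ k t * Complex.I) - Complex.exp (θ j t * Complex.I)) := by
    intro k j hkj
    have h := key1 t ht k j
    rw [if_neg hkj, zero_add] at h
    rw [eq_div_iff (sub_ne_zero.mpr (hLne k j hkj))]
    linear_combination -h
  -- diagonal coefficient is purely imaginary
  have key4 : ∀ k : Fin n, (ip (deriv (v k) t) (v k t)).re = 0 := by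
    intro k
    have hvD : ∀ p : Fin n, HasDerivAt (v p) (deriv (v p) t) t := fun p => (hv p t ht).hasDerivAt
    have h1 : HasDerivAt (fun s => ip (v k s) (v k s))
        (ip (deriv (v k) t) (v k t) + ip (v k t) (deriv (v k) t)) t :=
      hasDerivAt_ip (hvD k) (hvD k)
    have hev : (fun _ : ℝ => (1 : ℂ)) =ᶠ[nhds t] fun s => ip (v k s) (v k s) :=
      Filter.eventually_of_mem (hmemI t ht) (fun s hs => by
        show (1 : ℂ) = ip (v k s) (v k s)
        rw [horth s hs k k, if_pos rfl])
    have h2 := h1.congr_of_eventuallyEq hev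
    have h3 := h2.unique (hasDerivAt_const t (1 : ℂ))
    rw [ip_conj (v k t) (deriv (v k) t)] at h3
    have h4 := congrArg Complex.re h3
    simp only [Complex.add_re, Complex.star_def, Complex.conj_re, Complex.zero_re] at h4
    have h5 : ip (deriv (v k) t) (v k t) = star (ip (v k t) (deriv (v k) t)) := ip_conj _ _
    rw [h5, Complex.star_def, Complex.conj_re]
    linarith
  -- second derivative formula
  have key5 : ∀ k : Fin n, deriv (deriv (θ k)) t
      = (ip (x.mulVec (deriv (v k) t)) (v k t) + ip (x.mulVec (v k t)) (deriv (v k) t)).re := by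
    intro k
    have hvD : ∀ p : Fin n, HasDerivAt (v p) (deriv (v p) t) t := fun p => (hv p t ht).hasDerivAt
    have hinner : HasDerivAt (fun τ => ip (x.mulVec (v k τ)) (v k τ))
        (ip (x.mulVec (deriv (v k) t)) (v k t) + ip (x.mulVec (v k t)) (deriv (v k) t)) t :=
      hasDerivAt_ip (hasDerivAt_mulVec_const x (hvD k)) (hvD k)
    have hre : HasDerivAt (fun τ => (ip (x.mulVec (v k τ)) (v k τ)).re)
        ((ip (x.mulVec (deriv (v k) t)) (v k t) + ip (x.mulVec (v k t)) (deriv (v k) t)).re) t := by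
      simpa [Function.comp_def] using (Complex.reCLM.hasFDerivAt.comp_hasDerivAt t hinner)
    have hev : deriv (θ k) =ᶠ[nhds t] fun τ => (ip (x.mulVec (v k τ)) (v k τ)).re :=
      Filter.eventually_of_mem (hmemI t ht) (fun τ hτ => by
        show deriv (θ k) τ = (ip (x.mulVec (v k τ)) (v k τ)).re
        rw [← key2 τ hτ k, Complex.ofReal_re])
    have h2 := hre.congr_of_eventuallyEq hev
    exact ((hθ' k t ht).hasDerivAt).unique h2
  have key6 : ∀ k : Fin n, ip (x.mulVec (deriv (v k) t)) (v k t)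
      = star (ip (x.mulVec (v k t)) (deriv (v k) t)) := by
    intro k
    calc ip (x.mulVec (deriv (v k) t)) (v k t)
        = ip (deriv (v k) t) (x.mulVec (v k t)) := by rw [ip_mulVec, hx.eq]
      _ = star (ip (x.mulVec (v k t)) (deriv (v k) t)) := ip_conj _ _
  -- θ'' as a sum over j
  have hsum : ∀ k : Fin n, deriv (deriv (θ k)) t
      = 2 * ∑ j, (ip (x.mulVec (v k t)) (v j t) * star (ip (deriv (v k) t) (v j t))).re := by
    intro k
    rw [key5 k, key6 k]
    have hre2 : (star (ip (x.mulVec (v k t)) (deriv (v k) t))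
        + ip (x.mulVec (v k t)) (deriv (v k) t)).re
        = 2 * (ip (x.mulVec (v k t)) (deriv (v k) t)).re := by
      simp only [Complex.add_re, Complex.star_def, Complex.conj_re]
      ring
    rw [hre2, parseval (fun p => v p t) (horth t ht), Complex.re_sum]
  -- the S kernel
  set S : Fin n → Fin n → ℝ := fun k j =>
    if k = j then 0 else
      Real.sin (θ k t - θ j t)
        / ‖Complex.exp (θ k t * Complex.I) - Complex.exp (θ j t * Complex.I)‖ ^ 2
        * ‖ip (x.mulVec (v k t)) (v j t)‖ ^ 2 with hSdef
  have hterm : ∀ k j : Fin n,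
      (ip (x.mulVec (v k t)) (v j t) * star (ip (deriv (v k) t) (v j t))).re = S k j := by
    intro k j
    rcases eq_or_ne k j with rfl | hkj
    · rw [hSdef]
      simp only [if_pos rfl]
      rw [← key2 t ht k, Complex.re_ofReal_mul]
      simp [Complex.star_def, Complex.conj_re, key4 k, mul_zero]
    · rw [hSdef]
      simp only [if_neg hkj]
      rw [key3 k j hkj]
      exact re_term (θ k t) (θ j t) (hLne k j hkj) (ip (x.mulVec (v k t)) (v j t))
  have hAconj : ∀ k j : Fin n,
      ip (x.mulVec (v j t)) (v k t) = star (ip (x.mulVec (v k t)) (v j t)) := by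
    intro k j
    calc ip (x.mulVec (v j t)) (v k t)
        = ip (v j t) (x.mulVec (v k t)) := by rw [ip_mulVec, hx.eq]
      _ = star (ip (x.mulVec (v k t)) (v j t)) := ip_conj _ _
  have hSsym : ∀ k j : Fin n, S j k = - S k j := by
    intro k j
    rcases eq_or_ne k j with rfl | hkj
    · simp [hSdef]
    · rw [hSdef]
      simp only [if_neg hkj, if_neg (Ne.symm hkj)]
      have habs : ‖ip (x.mulVec (v j t)) (v k t)‖
          = ‖ip (x.mulVec (v k t)) (v j t)‖ := by
        rw [hAconj k j, Complex.star_def, Complex.norm_conj]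
      have hdabs : ‖Complex.exp (θ j t * Complex.I) - Complex.exp (θ k t * Complex.I)‖
          = ‖Complex.exp (θ k t * Complex.I) - Complex.exp (θ j t * Complex.I)‖ :=
        norm_sub_rev _ _
      rw [habs, hdabs, show θ j t - θ k t = -(θ k t - θ j t) by ring, Real.sin_neg]
      ring
  have hθ'' : ∀ k : Fin n, deriv (deriv (θ k)) t = 2 * ∑ j, S k j := by
    intro k
    rw [hsum k]
    congr 1
    exact Finset.sum_congr rfl (fun j _ => hterm k j)
  -- final assembly
  set A : Finset (Fin n) := Finset.univ.filter (fun k : Fin n => (k : ℕ) < m) with hAdef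
  set B : Finset (Fin n) := Finset.univ.filter (fun j : Fin n => m ≤ (j : ℕ)) with hBdef
  have hfilter : Finset.univ.filter (fun j : Fin n => ¬ (j : ℕ) < m) = B := by
    rw [hBdef]; ext j; simp [not_lt]
  have hsplit : ∀ k : Fin n, (∑ j, S k j) = (∑ j ∈ A, S k j) + (∑ j ∈ B, S k j) := by
    intro k
    rw [← Finset.sum_filter_add_sum_filter_not Finset.univ (fun j : Fin n => (j : ℕ) < m) (S k),
      hfilter]
  have hdiag : (∑ k ∈ A, ∑ j ∈ A, S k j) = 0 := by
    have h1 : (∑ k ∈ A, ∑ j ∈ A, S k j) = ∑ k ∈ A, ∑ j ∈ A, S j k := Finset.sum_comm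
    have h2 : (∑ k ∈ A, ∑ j ∈ A, S j k) = - ∑ k ∈ A, ∑ j ∈ A, S k j := by
      rw [← Finset.sum_neg_distrib]
      apply Finset.sum_congr rfl
      intro k _
      rw [← Finset.sum_neg_distrib]
      exact Finset.sum_congr rfl (fun j _ => hSsym k j)
    linarith [h1.trans h2]
  calc (∑ k ∈ A, deriv (deriv (θ k)) t)
      = ∑ k ∈ A, 2 * ∑ j, S k j := Finset.sum_congr rfl (fun k _ => hθ'' k)
    _ = 2 * ∑ k ∈ A, ∑ j, S k j := by rw [Finset.mul_sum]
    _ = 2 * ∑ k ∈ A, ((∑ j ∈ A, S k j) + (∑ j ∈ B, S k j)) := by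
        rw [Finset.sum_congr rfl (fun k _ => hsplit k)]
    _ = 2 * ((∑ k ∈ A, ∑ j ∈ A, S k j) + ∑ k ∈ A, ∑ j ∈ B, S k j) := by
        rw [Finset.sum_add_distrib]
    _ = 2 * ∑ k ∈ A, ∑ j ∈ B, S k j := by rw [hdiag, zero_add]
    _ = 2 * ∑ k ∈ A, ∑ j ∈ B,
          Real.sin (θ k t - θ j t)
            / ‖(Complex.exp (θ k t * Complex.I)
                - Complex.exp (θ j t * Complex.I))‖ ^ 2
            * ‖ip (x.mulVec (v k t)) (v j t)‖ ^ 2 := by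
        congr 1
        apply Finset.sum_congr rfl
        intro k hk
        apply Finset.sum_congr rfl
        intro j hj
        have hkm : (k : ℕ) < m := by
          rw [hAdef] at hk; simpa using hk
        have hjm : m ≤ (j : ℕ) := by
          rw [hBdef] at hj; simpa using hj
        have hkj : k ≠ j := by
          intro hh
          rw [hh] at hkm
          omega
        rw [hSdef]
        simp only [if_neg hkj]
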